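/- arXiv:math/0608200 — 2 statements merged into one kernel-verified Lean document; each statement's English description precedes it below -/
import Mathlib

section
/- Let A = diag(λ₁, λ₂) be a diagonal 2×2 real matrix with |λ₁| > 1 > |λ₂| and |λ₁λ₂| > 1. Let Λ = ℤu + ℤv be a full rank lattice in ℝ² with u = [u₁, u₂]ᵀ and v = [v₁, v₂]ᵀ. Assume u₁ and v₁ are rationally dependent, i.e. there exist integers p, q, not both zero, with q·u₁ = p·v₁. Then there exists no measurable set T ⊆ ℝ² such that T tiles translationally by Λ and multiplicatively by A. -/
open MeasureTheory Matrix Polynomial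
open scoped ENNReal Pointwise

/-- A countable family of sets is a tiling of `ℝ^d` if the sets are pairwise disjoint up to
Lebesgue-null sets and their union is all of `ℝ^d` up to a Lebesgue-null set. -/
def AETiling {d : ℕ} {ι : Type*} (t : ι → Set (Fin d → ℝ)) : Prop :=
  (Pairwise fun i j => volume (t i ∩ t j) = 0) ∧ volume ((⋃ i, t i)ᶜ) = 0

/-- A family of sets packs `ℝ^d` if the sets are pairwise disjoint up to Lebesgue-null sets. -/
def AEPacking {d : ℕ} {ι : Type*} (t : ι → Set (Fin d → ℝ)) : Prop :=
  Pairwise fun i j => volume (t i ∩ t j) = 0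

/-- The integer lattice `ℤ^d` inside `ℝ^d`. -/
def intVecs (d : ℕ) : Set (Fin d → ℝ) := Set.range fun k : Fin d → ℤ => fun i => (k i : ℝ)

/-- `T` tiles translationally by `J`. -/
def TilesTrans {d : ℕ} (T : Set (Fin d → ℝ)) (J : Set (Fin d → ℝ)) : Prop :=
  AETiling fun α : J => (fun x => x + (α : Fin d → ℝ)) '' T

/-- `T` packs translationally by `J`. -/
def PacksTrans {d : ℕ} (T : Set (Fin d → ℝ)) (J : Set (Fin d → ℝ)) : Prop :=
  AEPacking fun α : J => (fun x => x + (α : Fin d → ℝ)) '' T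

/-- `T` tiles multiplicatively by the matrix `A`. -/
def TilesMul {d : ℕ} (T : Set (Fin d → ℝ)) (A : Matrix (Fin d) (Fin d) ℝ) : Prop :=
  AETiling fun n : ℤ => (A ^ n).mulVec '' T

/-- `T` packs multiplicatively by the matrix `A`. -/
def PacksMul {d : ℕ} (T : Set (Fin d → ℝ)) (A : Matrix (Fin d) (Fin d) ℝ) : Prop :=
  AEPacking fun n : ℤ => (A ^ n).mulVec '' T

/-- A wavelet set in `ℝ²` with dilation `A`: a measurable set tiling translationally by `ℤ²`
and multiplicatively by `Aᵀ`. -/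
def IsWaveletSet (A : Matrix (Fin 2) (Fin 2) ℝ) (T : Set (Fin 2 → ℝ)) : Prop :=
  MeasurableSet T ∧ TilesTrans T (intVecs 2) ∧ TilesMul T Aᵀ

section Aux

/-- Volume of a box in `ℝ²`. -/
lemma IW_vol_box (s t : Set ℝ) :
    volume {x : Fin 2 → ℝ | x 0 ∈ s ∧ x 1 ∈ t} = volume s * volume t := by
  have : {x : Fin 2 → ℝ | x 0 ∈ s ∧ x 1 ∈ t} = Set.pi Set.univ ![s, t] := by
    ext x; simp [Fin.forall_fin_two]
  rw [this, volume_pi_pi]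
  simp [Fin.prod_univ_two]

/-- Volume scaling under a diagonal linear map. -/
lemma IW_vol_image_diag (d : Fin 2 → ℝ) (s : Set (Fin 2 → ℝ)) :
    volume ((Matrix.diagonal d).mulVec '' s) = ENNReal.ofReal |d 0 * d 1| * volume s := by
  have h1 : (Matrix.diagonal d).mulVec = ⇑((Matrix.diagonal d).mulVecLin) := by
    funext x; simp [Matrix.mulVecLin_apply]
  rw [h1, Measure.addHaar_image_linearMap]
  congr 2
  rw [← Matrix.toLin'_apply', LinearMap.det_toLin', Matrix.det_diagonal, Fin.prod_univ_two]

/-- Integer power of a diagonal matrix. -/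
lemma IW_diagonal_zpow (d : Fin 2 → ℝ) (hd : ∀ i, d i ≠ 0) (n : ℤ) :
    (Matrix.diagonal d) ^ n = Matrix.diagonal (fun i => d i ^ n) := by
  have hinv : ∀ k : ℕ, ((Matrix.diagonal d) ^ k)⁻¹ = Matrix.diagonal (fun i => (d i ^ k)⁻¹) := by
    intro k
    rw [Matrix.diagonal_pow]
    refine Matrix.inv_eq_right_inv ?_
    rw [Matrix.diagonal_mul_diagonal]
    have : (fun i => (d ^ k) i * (d i ^ k)⁻¹) = fun _ => (1 : ℝ) := by
      funext i; simp [mul_inv_cancel₀ (pow_ne_zero k (hd i))]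
    rw [this, Matrix.diagonal_one]
  cases n with
  | ofNat k =>
      rw [Int.ofNat_eq_coe, zpow_natCast, Matrix.diagonal_pow]
      have : (fun i => d i ^ ((k : ℤ))) = (fun i => (d ^ k) i) := by
        funext i; simp [zpow_natCast]
      rw [this]
  | negSucc k =>
      rw [zpow_negSucc, hinv]
      have : (fun i => d i ^ (Int.negSucc k)) = fun i => (d i ^ (k+1))⁻¹ := by
        funext i; rw [zpow_negSucc]
      rw [this]

lemma IW_abs_zpow (x : ℝ) (n : ℤ) : |x ^ n| = |x| ^ n := map_zpow₀ (absHom : ℝ →*₀ ℝ) x n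

end Aux

/-- **Proposition 3.5** (Ionascu–Wang). Let `A = diag(λ₁, λ₂)` with `|λ₁| > 1 > |λ₂|` and
`|λ₁ λ₂| > 1`, and let `Λ = ℤu + ℤv` be a full rank lattice in `ℝ²`. If `u₁` and `v₁` are
rationally dependent, then no measurable `T ⊆ ℝ²` tiles translationally by `Λ` and
multiplicatively by `A`. -/
theorem no_tile_diagonal_of_rational
    (l1 l2 : ℝ) (h1 : 1 < |l1|) (h2 : |l2| < 1) (hdet : 1 < |l1 * l2|)
    (u v : Fin 2 → ℝ) (hind : LinearIndependent ℝ ![u, v])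
    (hrat : ∃ p q : ℤ, ¬(p = 0 ∧ q = 0) ∧ (q : ℝ) * u 0 = (p : ℝ) * v 0) :
    ¬ ∃ T : Set (Fin 2 → ℝ), MeasurableSet T ∧
      TilesTrans T {x : Fin 2 → ℝ | ∃ m k : ℤ, x = m • u + k • v} ∧
      TilesMul T (Matrix.diagonal ![l1, l2]) := by
  rintro ⟨T, hTm, hTrans, hTmul⟩
  have hl1 : l1 ≠ 0 := by
    intro h; rw [h, abs_zero] at h1; linarith
  have hl2 : l2 ≠ 0 := by
    intro h; rw [h, mul_zero, abs_zero] at hdet; linarith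
  -- Step 0: rational dependence gives a common "gauge" γ for first coordinates.
  obtain ⟨γ, hγ, a, b, hu0, hv0⟩ :
      ∃ γ : ℝ, γ ≠ 0 ∧ ∃ a b : ℤ, u 0 = a * γ ∧ v 0 = b * γ := by
    obtain ⟨p, q, hpq, h⟩ := hrat
    by_cases hv : v 0 = 0
    · have hu : u 0 ≠ 0 := by
        intro hu
        rw [Fintype.linearIndependent_iff] at hind
        have hz : ∑ i, (![v 1, -(u 1)]) i • (![u, v]) i = 0 := by
          rw [Fin.sum_univ_two]
          funext i
          fin_cases i <;> simp [hu, hv] <;> ring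
        have h0 := hind ![v 1, -(u 1)] hz 0
        have h1' := hind ![v 1, -(u 1)] hz 1
        simp at h0 h1'
        have huzero : u = 0 := by
          funext i; fin_cases i <;> simp [hu, h1']
        have hne : (![u, v]) 0 ≠ 0 := by
          intro hcon
          have hz2 : ∑ i, (![(1:ℝ), 0]) i • (![u, v]) i = 0 := by
            rw [Fin.sum_univ_two]; simp [hcon]
          have := hind ![(1:ℝ), 0] hz2 0
          simp at this
        exact hne (by simpa using huzero)
      exact ⟨u 0, hu, 1, 0, by simp, by simp [hv]⟩
    · have hq : q ≠ 0 := by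
        intro hq0
        have hp : p ≠ 0 := by tauto
        rw [hq0] at h
        simp at h
        rcases h with h | h
        · exact hp (by exact_mod_cast h)
        · exact hv h
      refine ⟨v 0 / q, div_ne_zero hv (by exact_mod_cast hq), p, q, ?_, ?_⟩
      · field_simp
        linarith [h]
      · field_simp
  -- Step 1: the lattice as the ℤ-span of a basis.
  have hcard : Fintype.card (Fin 2) = Module.finrank ℝ (Fin 2 → ℝ) := by simp
  let bb : Module.Basis (Fin 2) ℝ (Fin 2 → ℝ) := basisOfLinearIndependentOfCardEqFinrank hind hcard
  have hbb : ⇑bb = ![u, v] := coe_basisOfLinearIndependentOfCardEqFinrank _ _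
  set L := Submodule.span ℤ (Set.range ⇑bb) with hL
  have hrange : Set.range ⇑bb = {u, v} := by
    rw [hbb]; ext x; simp [Fin.exists_fin_two]; tauto
  have hmemL : ∀ x, x ∈ L ↔ ∃ m k : ℤ, x = m • u + k • v := by
    intro x
    rw [hL, hrange, Submodule.mem_span_pair]
    constructor
    · rintro ⟨m, k, rfl⟩; exact ⟨m, k, rfl⟩
    · rintro ⟨m, k, rfl⟩; exact ⟨m, k, rfl⟩
  have hJL : {x : Fin 2 → ℝ | ∃ m k : ℤ, x = m • u + k • v} = (L : Set (Fin 2 → ℝ)) := by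
    ext x; rw [Set.mem_setOf_eq, SetLike.mem_coe, hmemL]
  have hL0 : ∀ g ∈ L, ∃ j : ℤ, g 0 = j * γ := by
    intro g hg
    obtain ⟨m, k, rfl⟩ := (hmemL g).1 hg
    refine ⟨m * a + k * b, ?_⟩
    have : (m • u + k • v) 0 = (m : ℝ) * u 0 + (k : ℝ) * v 0 := by
      simp [zsmul_eq_mul]
    rw [this, hu0, hv0]
    push_cast
    ring
  -- Step 2: fundamental domains.
  set F := ZSpan.fundamentalDomain bb with hF
  have hFd : IsAddFundamentalDomain L F volume := ZSpan.isAddFundamentalDomain bb volume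
  have himg : ∀ c : Fin 2 → ℝ, (fun x => x + c) '' T = c +ᵥ T := by
    intro c; ext y
    simp only [Set.mem_image, Set.mem_vadd_set]
    constructor
    · rintro ⟨t, ht, rfl⟩; exact ⟨t, ht, add_comm c t⟩
    · rintro ⟨t, ht, rfl⟩; exact ⟨t, ht, add_comm t c⟩
  haveI : Countable ↥L := by
    have hcnt : Set.Countable (L : Set (Fin 2 → ℝ)) := by
      have hsub : (L : Set (Fin 2 → ℝ)) ⊆
          Set.range (fun mk : ℤ × ℤ => (mk.1 • u + mk.2 • v : Fin 2 → ℝ)) := by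
        intro x hx
        obtain ⟨m, k, rfl⟩ := (hmemL x).1 hx
        exact ⟨(m, k), rfl⟩
      exact (Set.countable_range _).mono hsub
    exact hcnt.to_subtype
  haveI : MeasurableVAdd ↥L (Fin 2 → ℝ) := by
    refine @MeasurableVAdd.mk _ _ _ _ _ ⟨?_⟩ ?_
    · intro c
      exact (measurable_const.add measurable_id)
    · intro x
      have hc : Continuous fun g : ↥L => (g : Fin 2 → ℝ) + x :=
        (continuous_subtype_val).add continuous_const
      exact hc.measurable
  haveI : VAddInvariantMeasure ↥L (Fin 2 → ℝ) volume :=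
    ⟨fun c s hs => measure_preimage_add volume (c : Fin 2 → ℝ) s⟩
  have hTd : IsAddFundamentalDomain L T volume := by
    refine ⟨hTm.nullMeasurableSet, ?_, ?_⟩
    · -- covers a.e.
      have hcov := hTrans.2
      have hae : ∀ᵐ x, x ∈ ⋃ α : {x : Fin 2 → ℝ | ∃ m k : ℤ, x = m • u + k • v},
          (fun y => y + (α : Fin 2 → ℝ)) '' T := by
        rw [ae_iff]
        convert hcov using 2
        rfl
      filter_upwards [hae] with x hx
      rcases Set.mem_iUnion.1 hx with ⟨α, hα⟩
      rcases hα with ⟨t, htT, hxe⟩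
      have hαL : (α : Fin 2 → ℝ) ∈ L := (hmemL _).2 α.2
      refine ⟨⟨-(α : Fin 2 → ℝ), neg_mem hαL⟩, ?_⟩
      show -(α : Fin 2 → ℝ) + x ∈ T
      rw [← hxe]
      simpa using htT
    · -- pairwise a.e. disjoint
      intro g g' hgg'
      have hgJ : (g : Fin 2 → ℝ) ∈ {x : Fin 2 → ℝ | ∃ m k : ℤ, x = m • u + k • v} := by
        rw [hJL]; exact g.2
      have hg'J : (g' : Fin 2 → ℝ) ∈ {x : Fin 2 → ℝ | ∃ m k : ℤ, x = m • u + k • v} := by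
        rw [hJL]; exact g'.2
      have hne : (⟨(g : Fin 2 → ℝ), hgJ⟩ : {x : Fin 2 → ℝ | ∃ m k : ℤ, x = m • u + k • v}) ≠
          ⟨(g' : Fin 2 → ℝ), hg'J⟩ := by
        intro h
        have hval : (g : Fin 2 → ℝ) = (g' : Fin 2 → ℝ) := Subtype.mk_eq_mk.mp h
        exact hgg' (Subtype.ext hval)
      have := hTrans.1 hne
      show volume (((g : Fin 2 → ℝ) +ᵥ T) ∩ ((g' : Fin 2 → ℝ) +ᵥ T)) = 0
      rw [← himg, ← himg]
      exact this
  have hVTF : volume T = volume F := hTd.measure_eq hFd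
  have hFlt : volume F < ⊤ := (ZSpan.fundamentalDomain_isBounded bb).measure_lt_top
  have hVTlt : volume T < ⊤ := by rw [hVTF]; exact hFlt
  -- Step 3: strips.
  set S : ℝ → Set (Fin 2 → ℝ) := fun r => {x | |x 0| ≤ r} with hSdef
  set W : ℝ → Set (Fin 2 → ℝ) := fun r => {x | ∃ j : ℤ, |x 0 - j * γ| ≤ r} with hWdef
  have hWm : ∀ r, MeasurableSet (W r) := by
    intro r
    have : W r = ⋃ j : ℤ, {x : Fin 2 → ℝ | |x 0 - (j : ℝ) * γ| ≤ r} := by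
      ext x; simp [hWdef]
    rw [this]
    refine MeasurableSet.iUnion fun j => ?_
    exact measurableSet_le (((measurable_pi_apply 0).sub measurable_const).abs) measurable_const
  have hWinv : ∀ (g : L) (r : ℝ), (fun x => g +ᵥ x) ⁻¹' (W r) = W r := by
    intro g r
    obtain ⟨j0, hj0⟩ := hL0 (g : Fin 2 → ℝ) g.2
    ext x
    have hgx : (g +ᵥ x : Fin 2 → ℝ) 0 = (g : Fin 2 → ℝ) 0 + x 0 := rfl
    simp only [Set.mem_preimage, hWdef, Set.mem_setOf_eq, hgx, hj0]
    constructor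
    · rintro ⟨j, hj⟩
      refine ⟨j - j0, ?_⟩
      have : x 0 - (↑(j - j0)) * γ = (j0 : ℝ) * γ + x 0 - (j : ℝ) * γ := by
        push_cast; ring
      rw [this]; exact hj
    · rintro ⟨j, hj⟩
      refine ⟨j + j0, ?_⟩
      have : (j0 : ℝ) * γ + x 0 - (↑(j + j0)) * γ = x 0 - (j : ℝ) * γ := by
        push_cast; ring
      rw [this]; exact hj
  have hTWF : ∀ r : ℝ, volume (T ∩ W r) = volume (F ∩ W r) := by
    intro r
    have := hTd.measure_set_eq hFd (hWm r) (fun g => hWinv g r)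
    rwa [Set.inter_comm (W r) T, Set.inter_comm (W r) F] at this
  -- Step 4: the fundamental domain is bounded; volume of F ∩ W r is O(r).
  obtain ⟨R, hR1, hRF⟩ : ∃ R : ℝ, 1 ≤ R ∧ ∀ x ∈ F, |x 0| ≤ R ∧ |x 1| ≤ R := by
    obtain ⟨R0, hR0⟩ := (ZSpan.fundamentalDomain_isBounded bb).subset_closedBall 0
    refine ⟨max R0 1, le_max_right _ _, fun x hx => ?_⟩
    have hn : ‖x‖ ≤ R0 := by
      have := hR0 hx
      simpa [mem_closedBall_iff_norm] using this
    constructor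
    · exact le_trans (by simpa using norm_le_pi_norm x 0) (le_trans hn (le_max_left _ _))
    · exact le_trans (by simpa using norm_le_pi_norm x 1) (le_trans hn (le_max_left _ _))
  have hRpos : (0:ℝ) < R := lt_of_lt_of_le one_pos hR1
  set N : ℕ := ⌈(2 * R) / |γ|⌉₊ with hN
  set CC : ℝ≥0∞ := ((Finset.Icc (-(N:ℤ)) (N:ℤ)).card : ℝ≥0∞) * ENNReal.ofReal (4 * R) with hCC
  have hCClt : CC ≠ ⊤ := by
    rw [hCC]
    exact ENNReal.mul_ne_top (ENNReal.natCast_ne_top _) ENNReal.ofReal_ne_top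
  have hFW : ∀ r : ℝ, 0 < r → r ≤ R → volume (F ∩ W r) ≤ CC * ENNReal.ofReal r := by
    intro r hr hrR
    have hsub : F ∩ W r ⊆ ⋃ j ∈ Finset.Icc (-(N:ℤ)) (N:ℤ),
        {x : Fin 2 → ℝ | x 0 ∈ Set.Icc ((j:ℝ)*γ - r) ((j:ℝ)*γ + r) ∧ x 1 ∈ Set.Icc (-R) R} := by
      rintro x ⟨hxF, j, hj⟩
      have hx0 := (hRF x hxF).1
      have hx1 := (hRF x hxF).2
      have hjγ : |(j:ℝ) * γ| ≤ 2 * R := by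
        have h3 : |(j:ℝ)*γ| - |x 0| ≤ |x 0 - (j:ℝ)*γ| := by
          have := abs_sub_abs_le_abs_sub ((j:ℝ)*γ) (x 0)
          rw [abs_sub_comm] at this
          linarith
        linarith
      have hjN : j ∈ Finset.Icc (-(N:ℤ)) (N:ℤ) := by
        rw [Finset.mem_Icc]
        have hγpos : (0:ℝ) < |γ| := abs_pos.mpr hγ
        have hjabs : |(j:ℝ)| ≤ (N : ℝ) := by
          rw [abs_mul] at hjγ
          have hdd : |(j:ℝ)| ≤ 2 * R / |γ| := by
            rw [le_div_iff₀ hγpos]; exact hjγ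
          exact le_trans hdd (Nat.le_ceil _)
        have habs : |j| ≤ (N : ℤ) := by
          exact_mod_cast (by rwa [← Int.cast_abs] at hjabs : ((|j| : ℤ) : ℝ) ≤ ((N:ℤ) : ℝ))
        exact abs_le.mp habs
      refine Set.mem_biUnion hjN ?_
      obtain ⟨hj1, hj2⟩ := abs_le.mp hj
      obtain ⟨hx11, hx12⟩ := abs_le.mp hx1
      exact ⟨Set.mem_Icc.2 ⟨by linarith, by linarith⟩, Set.mem_Icc.2 ⟨by linarith, by linarith⟩⟩
    calc volume (F ∩ W r) ≤ ∑ j ∈ Finset.Icc (-(N:ℤ)) (N:ℤ),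
          volume {x : Fin 2 → ℝ | x 0 ∈ Set.Icc ((j:ℝ)*γ - r) ((j:ℝ)*γ + r) ∧
            x 1 ∈ Set.Icc (-R) R} :=
        le_trans (measure_mono hsub) (measure_biUnion_finset_le _ _)
      _ = ∑ j ∈ Finset.Icc (-(N:ℤ)) (N:ℤ), ENNReal.ofReal (4 * R) * ENNReal.ofReal r := by
          refine Finset.sum_congr rfl fun j _ => ?_
          rw [IW_vol_box, Real.volume_Icc, Real.volume_Icc]
          rw [← ENNReal.ofReal_mul (by linarith), ← ENNReal.ofReal_mul (by linarith)]
          congr 1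
          ring
      _ = CC * ENNReal.ofReal r := by
          rw [Finset.sum_const, nsmul_eq_mul, hCC, mul_assoc]
  -- Step 5: volume of T in a small strip is O(r).
  have hTS : ∀ r : ℝ, 0 < r → r ≤ R → volume (T ∩ S r) ≤ CC * ENNReal.ofReal r := by
    intro r hr hrR
    have hsub : T ∩ S r ⊆ T ∩ W r := by
      rintro x ⟨hxT, hxS⟩
      exact ⟨hxT, 0, by simpa [hSdef] using hxS⟩
    calc volume (T ∩ S r) ≤ volume (T ∩ W r) := measure_mono hsub
      _ = volume (F ∩ W r) := hTWF r
      _ ≤ CC * ENNReal.ofReal r := hFW r hr hrR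
  -- Step 6: multiplicative tiling computations.
  set A : Matrix (Fin 2) (Fin 2) ℝ := Matrix.diagonal ![l1, l2] with hA
  have hdvec : ∀ i : Fin 2, (![l1, l2] : Fin 2 → ℝ) i ≠ 0 := by
    intro i; fin_cases i <;> simpa
  have hterm : ∀ n : ℤ, volume (S 1 ∩ (A ^ n).mulVec '' T) =
      ENNReal.ofReal (|l1 * l2| ^ n) * volume (T ∩ (A ^ n).mulVec ⁻¹' S 1) := by
    intro n
    rw [hA, IW_diagonal_zpow _ hdvec]
    rw [Set.inter_comm, ← Set.image_inter_preimage, IW_vol_image_diag]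
    congr 2
    simp only [Matrix.cons_val_zero, Matrix.cons_val_one, Matrix.head_cons]
    rw [← mul_zpow, IW_abs_zpow]
  have hpre : ∀ n : ℤ, (A ^ n).mulVec ⁻¹' S 1 = S ((|l1| ^ n)⁻¹) := by
    intro n
    rw [hA, IW_diagonal_zpow _ hdvec]
    ext x
    have hmv : (Matrix.diagonal (fun i => (![l1, l2] : Fin 2 → ℝ) i ^ n)).mulVec x 0 =
        l1 ^ n * x 0 := by
      rw [Matrix.mulVec_diagonal]; simp
    simp only [Set.mem_preimage, hSdef, Set.mem_setOf_eq, hmv]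
    have hpos : (0:ℝ) < |l1| ^ n := zpow_pos (lt_trans one_pos h1) n
    rw [abs_mul, IW_abs_zpow]
    rw [mul_comm, ← le_div_iff₀ hpos, one_div]
  -- Step 7: summing up.
  set D := |l1 * l2| with hD
  have hDpos : (0:ℝ) < D := lt_trans one_pos hdet
  set q1 : ℝ≥0∞ := ENNReal.ofReal |l2| with hq1
  set q2 : ℝ≥0∞ := ENNReal.ofReal D⁻¹ with hq2
  have hq1lt : q1 < 1 := by rw [hq1]; exact ENNReal.ofReal_lt_one.mpr h2
  have hq2lt : q2 < 1 := by
    rw [hq2]; exact ENNReal.ofReal_lt_one.mpr (inv_lt_one_of_one_lt₀ hdet)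
  have hl1pos : (0:ℝ) < |l1| := lt_trans one_pos h1
  have hpos : ∀ k : ℕ, volume (S 1 ∩ (A ^ (k:ℤ)).mulVec '' T) ≤ CC * q1 ^ k := by
    intro k
    rw [hterm, hpre]
    have hrpos : (0:ℝ) < (|l1| ^ ((k:ℤ)))⁻¹ := by
      have := zpow_pos hl1pos (k:ℤ); positivity
    have hrR : (|l1| ^ ((k:ℤ)))⁻¹ ≤ R := by
      have h1le : (1:ℝ) ≤ |l1| ^ (k:ℤ) := by
        rw [zpow_natCast]; exact one_le_pow₀ h1.le
      have : (|l1| ^ ((k:ℤ)))⁻¹ ≤ 1 := by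
        rw [inv_le_one_iff₀]; right; exact h1le
      linarith
    have hkey : D ^ (k:ℤ) * (|l1| ^ ((k:ℤ)))⁻¹ = |l2| ^ k := by
      rw [zpow_natCast, zpow_natCast, hD, abs_mul, mul_pow]
      field_simp
    calc ENNReal.ofReal (D ^ (k:ℤ)) * volume (T ∩ S ((|l1| ^ ((k:ℤ)))⁻¹))
        ≤ ENNReal.ofReal (D ^ (k:ℤ)) * (CC * ENNReal.ofReal ((|l1| ^ ((k:ℤ)))⁻¹)) :=
          mul_le_mul_right (hTS _ hrpos hrR) _
      _ = CC * (ENNReal.ofReal (D ^ (k:ℤ)) * ENNReal.ofReal ((|l1| ^ ((k:ℤ)))⁻¹)) := by ring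
      _ = CC * ENNReal.ofReal (D ^ (k:ℤ) * (|l1| ^ ((k:ℤ)))⁻¹) := by
          rw [ENNReal.ofReal_mul (zpow_nonneg hDpos.le _)]
      _ = CC * ENNReal.ofReal (|l2| ^ k) := by rw [hkey]
      _ = CC * q1 ^ k := by rw [hq1, ENNReal.ofReal_pow (abs_nonneg _)]
  have hneg : ∀ k : ℕ, volume (S 1 ∩ (A ^ (Int.negSucc k)).mulVec '' T) ≤
      volume T * q2 ^ (k + 1) := by
    intro k
    rw [hterm, hpre]
    have hkey : D ^ (Int.negSucc k) = (D⁻¹) ^ (k+1) := by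
      rw [zpow_negSucc, inv_pow]
    calc ENNReal.ofReal (D ^ (Int.negSucc k)) * volume (T ∩ S ((|l1| ^ (Int.negSucc k))⁻¹)) ≤
          ENNReal.ofReal (D ^ (Int.negSucc k)) * volume T :=
          mul_le_mul_right (measure_mono Set.inter_subset_left) _
      _ = volume T * ENNReal.ofReal (D ^ (Int.negSucc k)) := mul_comm _ _
      _ = volume T * q2 ^ (k+1) := by
          rw [hkey, hq2, ENNReal.ofReal_pow (by positivity)]
  have hsplit : (⋃ n : ℤ, S 1 ∩ (A ^ n).mulVec '' T) =
      (⋃ k : ℕ, S 1 ∩ (A ^ ((k:ℤ))).mulVec '' T) ∪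
        ⋃ k : ℕ, S 1 ∩ (A ^ (Int.negSucc k)).mulVec '' T := by
    ext x
    simp only [Set.mem_iUnion, Set.mem_union]
    constructor
    · rintro ⟨n, hn⟩
      cases n with
      | ofNat k => exact Or.inl ⟨k, hn⟩
      | negSucc k => exact Or.inr ⟨k, hn⟩
    · rintro (⟨k, hk⟩ | ⟨k, hk⟩)
      · exact ⟨(k:ℤ), hk⟩
      · exact ⟨Int.negSucc k, hk⟩
  have hS1 : volume (S 1) = ⊤ := by
    have hbox : S 1 = {x : Fin 2 → ℝ | x 0 ∈ Set.Icc (-1:ℝ) 1 ∧ x 1 ∈ Set.univ} := by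
      ext x; simp [hSdef, abs_le]
    rw [hbox, IW_vol_box, Real.volume_Icc, Real.volume_univ, ENNReal.mul_top]
    rw [Ne, ENNReal.ofReal_eq_zero]
    norm_num
  have hcovM : volume ((⋃ n : ℤ, (A ^ n).mulVec '' T)ᶜ) = 0 := hTmul.2
  have hν : volume (S 1) ≤ volume (⋃ n : ℤ, S 1 ∩ (A ^ n).mulVec '' T) := by
    have hinter : volume (S 1) ≤ volume (S 1 ∩ ⋃ n : ℤ, (A ^ n).mulVec '' T) +
        volume (S 1 \ ⋃ n : ℤ, (A ^ n).mulVec '' T) := measure_le_inter_add_diff _ _ _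
    have hz : volume (S 1 \ ⋃ n : ℤ, (A ^ n).mulVec '' T) = 0 :=
      measure_mono_null (Set.diff_subset_compl _ _) hcovM
    rw [hz, add_zero] at hinter
    rwa [Set.inter_iUnion] at hinter
  rw [hsplit] at hν
  have hν2 : volume (S 1) ≤ (∑' k : ℕ, volume (S 1 ∩ (A ^ ((k:ℤ))).mulVec '' T)) +
      ∑' k : ℕ, volume (S 1 ∩ (A ^ (Int.negSucc k)).mulVec '' T) :=
    le_trans hν (le_trans (measure_union_le _ _)
      (add_le_add (measure_iUnion_le _) (measure_iUnion_le _)))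
  have hsum1 : (∑' k : ℕ, volume (S 1 ∩ (A ^ ((k:ℤ))).mulVec '' T)) ≤ CC * (1 - q1)⁻¹ := by
    calc (∑' k : ℕ, volume (S 1 ∩ (A ^ ((k:ℤ))).mulVec '' T)) ≤ ∑' k : ℕ, CC * q1 ^ k :=
        ENNReal.tsum_le_tsum hpos
      _ = CC * ∑' k : ℕ, q1 ^ k := ENNReal.tsum_mul_left
      _ = CC * (1 - q1)⁻¹ := by rw [ENNReal.tsum_geometric]
  have hsum2 : (∑' k : ℕ, volume (S 1 ∩ (A ^ (Int.negSucc k)).mulVec '' T)) ≤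
      volume T * (1 - q2)⁻¹ := by
    calc (∑' k : ℕ, volume (S 1 ∩ (A ^ (Int.negSucc k)).mulVec '' T)) ≤
          ∑' k : ℕ, volume T * q2 ^ (k+1) := ENNReal.tsum_le_tsum hneg
      _ = volume T * ∑' k : ℕ, q2 ^ (k+1) := ENNReal.tsum_mul_left
      _ ≤ volume T * ∑' k : ℕ, q2 ^ k := by
          refine mul_le_mul_right ?_ _
          exact ENNReal.tsum_comp_le_tsum_of_injective (fun a b h => by omega) (fun k => q2 ^ k)
      _ = volume T * (1 - q2)⁻¹ := by rw [ENNReal.tsum_geometric]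
  have hfin : CC * (1 - q1)⁻¹ + volume T * (1 - q2)⁻¹ ≠ ⊤ := by
    have hn1 : (1 - q1)⁻¹ ≠ ⊤ := by
      rw [Ne, ENNReal.inv_eq_top, tsub_eq_zero_iff_le]
      exact not_le.mpr hq1lt
    have hn2 : (1 - q2)⁻¹ ≠ ⊤ := by
      rw [Ne, ENNReal.inv_eq_top, tsub_eq_zero_iff_le]
      exact not_le.mpr hq2lt
    exact ENNReal.add_ne_top.mpr ⟨ENNReal.mul_ne_top hCClt hn1,
      ENNReal.mul_ne_top hVTlt.ne hn2⟩
  have htop : (⊤ : ℝ≥0∞) ≤ CC * (1 - q1)⁻¹ + volume T * (1 - q2)⁻¹ := by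
    rw [← hS1]
    exact le_trans hν2 (add_le_add hsum1 hsum2)
  exact hfin (top_le_iff.mp htop)
end

section
/- Let A = diag(λ₁, λ₂) be a diagonal 2×2 real matrix with |λ₁| > 1 > |λ₂| and |λ₁λ₂| > 1, and let Λ = ℤu + ℤv be a full rank lattice in ℝ² with u = [u₁, u₂]ᵀ, v = [v₁, v₂]ᵀ, such that u₁/v₁ is irrational. Then for every r > 0 there are infinitely many n ∈ ℕ such that the set A^{−n}([−r, r]²) packs translationally by Λ. -/
open MeasureTheory Matrix Polynomial

/- ### Auxiliary lemmas -/

lemma par_trans {a b c d e g : ℤ} (h1 : a*d = c*b) (h2 : c*g = e*d)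
    (h : c ≠ 0 ∨ d ≠ 0) : a*g = e*b := by
  rcases h with hc | hd
  · apply mul_left_cancel₀ hc
    calc c*(a*g) = a*(c*g) := by ring
    _ = a*(e*d) := by rw [h2]
    _ = e*(a*d) := by ring
    _ = e*(c*b) := by rw [h1]
    _ = c*(e*b) := by ring
  · apply mul_left_cancel₀ hd
    calc d*(a*g) = g*(a*d) := by ring
    _ = g*(c*b) := by rw [h1]
    _ = b*(c*g) := by ring
    _ = b*(e*d) := by rw [h2]
    _ = d*(e*b) := by ring

/-- Key number-theoretic step: infinitely many good scales. -/
lemma key_infinite (U1 V1 U2 V2 p q r : ℝ) (hp : 1 < p) (hq0 : 0 < q)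
    (hpq : 1 < p * q) (hr : 0 < r)
    (hD : U1 * V2 - U2 * V1 ≠ 0)
    (hnz : ∀ m k : ℤ, (m ≠ 0 ∨ k ≠ 0) → (m : ℝ) * U1 + (k : ℝ) * V1 ≠ 0) :
    {n : ℕ | ∀ m k : ℤ, (m ≠ 0 ∨ k ≠ 0) →
        2*r / p^n ≤ |(m:ℝ) * U1 + (k:ℝ) * V1| ∨
        2*r / q^n ≤ |(m:ℝ) * U2 + (k:ℝ) * V2|}.Infinite := by
  set D := |U1 * V2 - U2 * V1| with hDdef
  have hD0 : 0 < D := abs_pos.mpr hD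
  have hp0 : 0 < p := lt_trans one_pos hp
  have hC : (0:ℝ) < 4*r^2*(1/q + 1/p) := by positivity
  have hpq0 : 0 < p * q := lt_trans one_pos hpq
  have hlt1 : 1/(p*q) < 1 := by rw [div_lt_one hpq0]; exact hpq
  have htend := tendsto_pow_atTop_nhds_zero_of_lt_one
    (le_of_lt (by positivity : (0:ℝ) < 1/(p*q))) hlt1
  have hev : ∀ᶠ n in Filter.atTop, (1/(p*q))^n < D / (4*r^2*(1/q+1/p)) :=
    htend.eventually (gt_mem_nhds (by positivity))
  obtain ⟨N₀, hN₀⟩ := Filter.eventually_atTop.mp hev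
  apply Set.infinite_of_forall_exists_gt
  intro N
  by_contra hcon
  push_neg at hcon
  set n₀ := max (N+1) N₀ with hn₀def
  have hn₀N : N + 1 ≤ n₀ := le_max_left _ _
  have hn₀N₀ : N₀ ≤ n₀ := le_max_right _ _
  have hbad : ∀ j : ℕ, ∃ mk : ℤ × ℤ, (mk.1 ≠ 0 ∨ mk.2 ≠ 0) ∧
      |(mk.1:ℝ) * U1 + (mk.2:ℝ) * V1| < 2*r / p^(n₀+j) ∧
      |(mk.1:ℝ) * U2 + (mk.2:ℝ) * V2| < 2*r / q^(n₀+j) := by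
    intro j
    have hnot : ¬ (∀ m k : ℤ, (m ≠ 0 ∨ k ≠ 0) →
        2*r / p^(n₀+j) ≤ |(m:ℝ) * U1 + (k:ℝ) * V1| ∨
        2*r / q^(n₀+j) ≤ |(m:ℝ) * U2 + (k:ℝ) * V2|) := by
      intro hmem
      have := hcon (n₀+j) hmem
      omega
    push_neg at hnot
    obtain ⟨m, k, hmk, h1, h2⟩ := hnot
    exact ⟨(m,k), hmk, h1, h2⟩
  choose f hf0 hf1 hf2 using hbad
  -- consecutive witnesses are parallel
  have hpar : ∀ j, (f j).1 * (f (j+1)).2 = (f (j+1)).1 * (f j).2 := by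
    intro j
    by_contra hne
    have hZ : (f j).1 * (f (j+1)).2 - (f (j+1)).1 * (f j).2 ≠ 0 := by
      intro h; apply hne; omega
    have h1R : (1:ℝ) ≤ |(((f j).1 * (f (j+1)).2 - (f (j+1)).1 * (f j).2 : ℤ) : ℝ)| := by
      exact_mod_cast Int.one_le_abs hZ
    set A1 := ((f j).1:ℝ) * U1 + ((f j).2:ℝ) * V1 with hA1
    set A2 := ((f j).1:ℝ) * U2 + ((f j).2:ℝ) * V2 with hA2
    set B1 := ((f (j+1)).1:ℝ) * U1 + ((f (j+1)).2:ℝ) * V1 with hB1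
    set B2 := ((f (j+1)).1:ℝ) * U2 + ((f (j+1)).2:ℝ) * V2 with hB2
    have hid : A1 * B2 - A2 * B1
        = (((f j).1 * (f (j+1)).2 - (f (j+1)).1 * (f j).2 : ℤ) : ℝ) * (U1*V2 - U2*V1) := by
      push_cast; ring
    have hDle : D ≤ |A1 * B2 - A2 * B1| := by
      rw [hid, abs_mul]
      calc D = 1 * D := (one_mul D).symm
      _ ≤ |(((f j).1 * (f (j+1)).2 - (f (j+1)).1 * (f j).2 : ℤ) : ℝ)| * D := by
          apply mul_le_mul_of_nonneg_right h1R hD0.le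
    have htri : |A1 * B2 - A2 * B1| ≤ |A1| * |B2| + |A2| * |B1| := by
      calc |A1 * B2 - A2 * B1| ≤ |A1 * B2| + |A2 * B1| := abs_sub _ _
      _ = |A1| * |B2| + |A2| * |B1| := by rw [abs_mul, abs_mul]
    have hb1 : |A1| * |B2| < (2*r/p^(n₀+j))*(2*r/q^(n₀+(j+1))) :=
      mul_lt_mul'' (hf1 j) (hf2 (j+1)) (abs_nonneg _) (abs_nonneg _)
    have hb2 : |A2| * |B1| < (2*r/q^(n₀+j))*(2*r/p^(n₀+(j+1))) :=
      mul_lt_mul'' (hf2 j) (hf1 (j+1)) (abs_nonneg _) (abs_nonneg _)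
    have hq0' : q ≠ 0 := ne_of_gt hq0
    have hp0' : p ≠ 0 := ne_of_gt hp0
    have heq : (2*r/p^(n₀+j))*(2*r/q^(n₀+(j+1))) + (2*r/q^(n₀+j))*(2*r/p^(n₀+(j+1)))
        = (1/(p*q))^(n₀+j) * (4*r^2*(1/q+1/p)) := by
      rw [show n₀+(j+1) = (n₀+j)+1 by omega]
      rw [div_pow, one_pow, mul_pow]
      field_simp
      ring
    have hsm : (1/(p*q))^(n₀+j) * (4*r^2*(1/q+1/p)) < D := by
      have := hN₀ (n₀+j) (by omega)
      exact (lt_div_iff₀ hC).mp this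
    linarith
  -- all witnesses parallel to the first
  have hparj : ∀ j, (f 0).1 * (f j).2 = (f j).1 * (f 0).2 := by
    intro j
    induction j with
    | zero => ring
    | succ i ih => exact par_trans ih (hpar i) (hf0 i)
  set γ : ℕ → ℝ := fun j => ((f j).1:ℝ) * U1 + ((f j).2:ℝ) * V1 with hγ
  have hid1 : ∀ j, ((f 0).1:ℝ) * γ j = ((f j).1:ℝ) * γ 0 := by
    intro j
    have hc : (((f 0).1 * (f j).2 : ℤ) : ℝ) = (((f j).1 * (f 0).2 : ℤ) : ℝ) := by
      exact_mod_cast hparj j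
    push_cast at hc
    simp only [hγ]
    linear_combination V1 * hc
  have hid2 : ∀ j, ((f 0).2:ℝ) * γ j = ((f j).2:ℝ) * γ 0 := by
    intro j
    have hc : (((f 0).1 * (f j).2 : ℤ) : ℝ) = (((f j).1 * (f 0).2 : ℤ) : ℝ) := by
      exact_mod_cast hparj j
    push_cast at hc
    simp only [hγ]
    linear_combination (-U1) * hc
  have hg0 : γ 0 ≠ 0 := hnz _ _ (hf0 0)
  set M : ℝ := |((f 0).1:ℝ)| + |((f 0).2:ℝ)| with hM
  have hM0 : 0 < M := by
    rcases hf0 0 with h | h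
    · have : (1:ℝ) ≤ |((f 0).1:ℝ)| := by exact_mod_cast Int.one_le_abs h
      have := abs_nonneg (((f 0).2:ℝ))
      simp only [hM]; linarith
    · have : (1:ℝ) ≤ |((f 0).2:ℝ)| := by exact_mod_cast Int.one_le_abs h
      have := abs_nonneg (((f 0).1:ℝ))
      simp only [hM]; linarith
  have hlow : ∀ j, |γ 0| ≤ M * |γ j| := by
    intro j
    rcases hf0 j with h | h
    · have h1R : (1:ℝ) ≤ |((f j).1:ℝ)| := by exact_mod_cast Int.one_le_abs h
      have e1 : |((f 0).1:ℝ)| * |γ j| = |((f j).1:ℝ)| * |γ 0| := by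
        rw [← abs_mul, ← abs_mul, hid1 j]
      nlinarith [abs_nonneg (γ 0), abs_nonneg (γ j), abs_nonneg (((f 0).2:ℝ)),
        abs_nonneg (((f 0).1:ℝ))]
    · have h1R : (1:ℝ) ≤ |((f j).2:ℝ)| := by exact_mod_cast Int.one_le_abs h
      have e1 : |((f 0).2:ℝ)| * |γ j| = |((f j).2:ℝ)| * |γ 0| := by
        rw [← abs_mul, ← abs_mul, hid2 j]
      nlinarith [abs_nonneg (γ 0), abs_nonneg (γ j), abs_nonneg (((f 0).2:ℝ)),
        abs_nonneg (((f 0).1:ℝ))]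
  -- pick j with p^(n₀+j) large
  obtain ⟨j, hj⟩ := pow_unbounded_of_one_lt (M * (2*r) / |γ 0|) hp
  have hpn : (0:ℝ) < p^(n₀+j) := pow_pos hp0 _
  have hpj : p^j ≤ p^(n₀+j) := pow_le_pow_right₀ hp.le (Nat.le_add_left _ _)
  have habs0 : (0:ℝ) < |γ 0| := abs_pos.mpr hg0
  have h2' : M * (2*r) < |γ 0| * p^(n₀+j) := by
    have := (div_lt_iff₀ habs0).mp hj
    nlinarith
  have hsmall : M * (2*r/p^(n₀+j)) < |γ 0| := by
    rw [show M * (2*r/p^(n₀+j)) = (M * (2*r))/p^(n₀+j) by ring]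
    rw [div_lt_iff₀ hpn]
    nlinarith
  have hle := hlow j
  have hγj : |γ j| < 2*r/p^(n₀+j) := hf1 j
  have hmul := mul_lt_mul_of_pos_left hγj hM0
  exact absurd (lt_of_le_of_lt hle (lt_trans hmul hsmall)) (lt_irrefl _)

/-- If two translates of a set contained in a slab of width `2c` in coordinate `i`
are translated by vectors whose `i`-th coordinates differ by at least `2c`,
the translates intersect in a null set. -/
lemma vol_inter_null {S : Set (Fin 2 → ℝ)} {i : Fin 2} {c : ℝ}
    (hS : ∀ x ∈ S, |x i| ≤ c) {α β : Fin 2 → ℝ} (h : 2*c ≤ |α i - β i|) :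
    volume ((fun x => x + α) '' S ∩ (fun x => x + β) '' S) = 0 := by
  set L := max (α i) (β i) - c with hLdef
  set U := min (α i) (β i) + c with hUdef
  have hsub : ((fun x => x + α) '' S ∩ (fun x => x + β) '' S) ⊆
      Set.univ.pi (fun j => if j = i then Set.Icc L U else Set.univ) := by
    rintro x ⟨⟨y, hy, rfl⟩, z, hz, hzx⟩
    intro j _
    by_cases hj : j = i
    · subst hj
      simp only [if_pos rfl]
      have h1 := hS y hy
      have h2 := hS z hz
      have h3 : z j + β j = y j + α j := by
        have := congrFun hzx j
        simpa [Pi.add_apply] using this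
      rw [abs_le] at h1 h2
      constructor
      · simp only [Pi.add_apply, hLdef]
        rw [sub_le_iff_le_add]
        exact max_le (by linarith) (by linarith)
      · simp only [Pi.add_apply, hUdef]
        rw [← min_add_add_right]
        exact le_min (by linarith) (by linarith)
    · simp [hj]
  refine measure_mono_null hsub ?_
  rw [volume_pi_pi, Fin.prod_univ_two]
  have hIcc : volume (Set.Icc L U) = 0 := by
    rw [Real.volume_Icc]
    apply ENNReal.ofReal_eq_zero.mpr
    have hmm : max (α i) (β i) - min (α i) (β i) = |α i - β i| := by
      rw [← max_sub_min_eq_abs (β i) (α i)]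
      simp [max_comm, min_comm]
    simp only [hLdef, hUdef]
    linarith
  fin_cases i <;> simp [hIcc]

lemma diag_zpow_entry (l1 l2 : ℝ) (hl1 : l1 ≠ 0) (hl2 : l2 ≠ 0) (n : ℕ) :
    (Matrix.diagonal ![l1, l2]) ^ (-(n : ℤ)) =
      Matrix.diagonal ![l1 ^ (-(n:ℤ)), l2 ^ (-(n:ℤ))] := by
  cases n with
  | zero =>
    have h1 : ![l1 ^ (-(0:ℕ) : ℤ), l2 ^ (-(0:ℕ) : ℤ)] = (fun _ => (1:ℝ)) := by
      funext i; fin_cases i <;> simp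
    rw [h1]
    simp [Matrix.diagonal_one]
  | succ k =>
    have hneg : (-((k+1 : ℕ) : ℤ)) = Int.negSucc k := by
      rw [Int.negSucc_eq]; push_cast; ring
    rw [hneg, zpow_negSucc]
    have h2 : ![l1 ^ Int.negSucc k, l2 ^ Int.negSucc k]
        = fun i => (![l1, l2] i ^ (k+1))⁻¹ := by
      funext i; fin_cases i <;> simp [zpow_negSucc]
    rw [h2, Matrix.diagonal_pow]
    apply Matrix.inv_eq_right_inv
    rw [Matrix.diagonal_mul_diagonal]
    have h3 : (fun i => (![l1, l2] ^ (k+1)) i * (![l1, l2] i ^ (k+1))⁻¹)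
        = fun _ => (1:ℝ) := by
      funext i
      have hne : ![l1, l2] i ≠ 0 := by fin_cases i <;> assumption
      simp [Pi.pow_apply]
      exact mul_inv_cancel₀ (pow_ne_zero _ hne)
    rw [h3, Matrix.diagonal_one]

/-- A key step of **Proposition 3.4** (Ionascu–Wang). Let `A = diag(λ₁, λ₂)` with
`|λ₁| > 1 > |λ₂|` and `|λ₁ λ₂| > 1`, and let `Λ = ℤu + ℤv` be a full rank lattice in `ℝ²`
with `u₁/v₁` irrational. Then for every `r > 0` there are infinitely many `n ∈ ℕ` such that
`A^{-n}([-r, r]²)` packs translationally by `Λ`. -/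
theorem infinite_packing_powers_of_irrational
    (l1 l2 : ℝ) (h1 : 1 < |l1|) (h2 : |l2| < 1) (hdet : 1 < |l1 * l2|)
    (u v : Fin 2 → ℝ) (hind : LinearIndependent ℝ ![u, v])
    (hirr : Irrational (u 0 / v 0)) (r : ℝ) (hr : 0 < r) :
    {n : ℕ | PacksTrans
        (((Matrix.diagonal ![l1, l2]) ^ (-(n : ℤ))).mulVec ''
          {x : Fin 2 → ℝ | ∀ i, x i ∈ Set.Icc (-r) r})
        {x : Fin 2 → ℝ | ∃ m k : ℤ, x = m • u + k • v}}.Infinite := by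
  have hl1 : l1 ≠ 0 := by
    intro h; rw [h] at h1; simp at h1; linarith
  have hl2 : l2 ≠ 0 := by
    intro h; rw [h] at hdet; simp at hdet; linarith
  have hv0 : v 0 ≠ 0 := by
    intro h
    apply Rat.not_irrational 0
    simpa [h] using hirr
  have hu0 : u 0 ≠ 0 := by
    intro h
    apply Rat.not_irrational 0
    simpa [h] using hirr
  have hnz : ∀ m k : ℤ, (m ≠ 0 ∨ k ≠ 0) → (m:ℝ) * u 0 + (k:ℝ) * v 0 ≠ 0 := by
    intro m k hmk h
    by_cases hm : m = 0
    · subst hm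
      simp at h
      rcases hmk with h' | h'
      · exact h' rfl
      · rcases h with h'' | h''
        · exact h' h''
        · exact hv0 h''
    · have hmR : (m:ℝ) ≠ 0 := Int.cast_ne_zero.mpr hm
      apply hirr
      refine ⟨((-k : ℚ)) / (m : ℚ), ?_⟩
      push_cast
      rw [div_eq_div_iff hmR hv0]
      linarith [h]
  have hD : u 0 * v 1 - u 1 * v 0 ≠ 0 := by
    intro h
    rw [linearIndependent_fin2] at hind
    simp only [Matrix.cons_val_one, Matrix.head_cons, Matrix.cons_val_zero] at hind
    obtain ⟨hv, hlin⟩ := hind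
    apply hlin (u 0 / v 0)
    funext i
    fin_cases i
    · simp [Pi.smul_apply, smul_eq_mul]
      field_simp
    · simp [Pi.smul_apply, smul_eq_mul]
      field_simp
      linarith
  have hq0 : 0 < |l2| := abs_pos.mpr hl2
  have hpq : 1 < |l1| * |l2| := by rw [← abs_mul]; exact hdet
  have hkey := key_infinite (u 0) (v 0) (u 1) (v 1) (|l1|) (|l2|) r h1 hq0 hpq hr hD hnz
  refine hkey.mono ?_
  intro n hn
  simp only [Set.mem_setOf_eq] at hn ⊢
  unfold PacksTrans AEPacking
  intro a b hab
  obtain ⟨m, k, ha⟩ := a.2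
  obtain ⟨m', k', hb⟩ := b.2
  have hMK : (m - m' ≠ 0 ∨ k - k' ≠ 0) := by
    by_contra hc
    push_neg at hc
    obtain ⟨h1', h2'⟩ := hc
    apply hab
    apply Subtype.ext
    rw [ha, hb]
    have hm : m = m' := by omega
    have hk : k = k' := by omega
    rw [hm, hk]
  have hcoord : ∀ i, (a : Fin 2 → ℝ) i - (b : Fin 2 → ℝ) i
      = ((m - m' : ℤ) : ℝ) * u i + ((k - k' : ℤ) : ℝ) * v i := by
    intro i
    rw [ha, hb]
    simp only [Pi.add_apply, Pi.smul_apply, zsmul_eq_mul, Pi.mul_apply, Pi.intCast_apply]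
    push_cast
    ring
  have hpn : (0:ℝ) < |l1|^n := pow_pos (lt_trans one_pos h1) _
  have hqn : (0:ℝ) < |l2|^n := pow_pos hq0 _
  have hSbound : ∀ i : Fin 2, ∀ x ∈ (((Matrix.diagonal ![l1, l2]) ^ (-(n : ℤ))).mulVec ''
      {x : Fin 2 → ℝ | ∀ i, x i ∈ Set.Icc (-r) r}),
      |x i| ≤ r / (![|l1|, |l2|] i)^n := by
    rintro i x ⟨y, hy, rfl⟩
    rw [diag_zpow_entry l1 l2 hl1 hl2 n]
    rw [show ((Matrix.diagonal ![l1 ^ (-(n:ℤ)), l2 ^ (-(n:ℤ))]).mulVec y) i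
      = ![l1 ^ (-(n:ℤ)), l2 ^ (-(n:ℤ))] i * y i from Matrix.mulVec_diagonal _ _ _]
    have hyi : |y i| ≤ r := by
      have := hy i
      rw [Set.mem_Icc] at this
      exact abs_le.mpr this
    have habs : |![l1 ^ (-(n:ℤ)), l2 ^ (-(n:ℤ))] i| = ((![|l1|, |l2|] i)^n)⁻¹ := by
      fin_cases i <;> simp [_root_.zpow_neg, zpow_natCast, abs_inv, abs_pow]
    rw [abs_mul, habs, div_eq_mul_inv, mul_comm r]
    have hpos : (0:ℝ) < (![|l1|, |l2|] i)^n := by fin_cases i <;> assumption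
    apply mul_le_mul_of_nonneg_left hyi (by positivity)
  rcases hn (m - m') (k - k') hMK with hgood | hgood
  · apply vol_inter_null (i := 0) (c := r / |l1|^n) (fun x hx => by
      simpa using hSbound 0 x hx)
    rw [hcoord 0]
    calc 2 * (r / |l1|^n) = 2*r/|l1|^n := by ring
    _ ≤ _ := by push_cast at hgood ⊢; exact hgood
  · apply vol_inter_null (i := 1) (c := r / |l2|^n) (fun x hx => by
      simpa using hSbound 1 x hx)
    rw [hcoord 1]
    calc 2 * (r / |l2|^n) = 2*r/|l2|^n := by ring
    _ ≤ _ := by push_cast at hgood ⊢; exact hgood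
end
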